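/- Let m ≥ 1, let g be a Boolean function in m variables, and define the Maiorana–McFarland bent function f : 𝔽₂^m × 𝔽₂^m → 𝔽₂ by f(x,y) = x·y + g(y). Then the following are equivalent: (1) for all a, b, c, d ∈ 𝔽₂^m there exist α, β ∈ 𝔽₂^m and ε ∈ 𝔽₂ such that f(x,y) + f(x+a, y+b) + f(x+c, y+d) = f(x+α, y+β) + ε for all x, y ∈ 𝔽₂^m (this is the triple symmetric difference property of the translation design of f); (2) g has algebraic degree at most 3. -/
import Mathlib


open Finset

/-- dot product on 𝔽₂^m -/
def dotp {m : ℕ} (a x : Fin m → ZMod 2) : ZMod 2 := ∑ i, a i * x i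

/-- (−1)^a for a ∈ 𝔽₂, as an integer -/
def sgn (a : ZMod 2) : ℤ := if a = 0 then 1 else -1

/-- Walsh transform of f on a finite subset P of 𝔽₂^m -/
def walsh {m : ℕ} (P : Finset (Fin m → ZMod 2)) (f : (Fin m → ZMod 2) → ZMod 2)
    (u : Fin m → ZMod 2) : ℤ :=
  ∑ x ∈ P, sgn (f x + dotp u x)

/-- Walsh transform of f on all of 𝔽₂^m -/
def walshF {m : ℕ} (f : (Fin m → ZMod 2) → ZMod 2) (u : Fin m → ZMod 2) : ℤ :=
  walsh Finset.univ f u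


/-- The algebraic degree of a Boolean function is at most d. -/
def DegLE {m : ℕ} (d : ℕ) (g : (Fin m → ZMod 2) → ZMod 2) : Prop :=
  ∃ c : Finset (Fin m) → ZMod 2,
    (∀ S : Finset (Fin m), d < S.card → c S = 0) ∧
    ∀ x, g x = ∑ S : Finset (Fin m), c S * ∏ i ∈ S, x i


section AuxMM

variable {m : ℕ}

variable {m : ℕ}

lemma zmod2_cases (a : ZMod 2) : a = 0 ∨ a = 1 := by revert a; decide

lemma zmod2_add_self (a : ZMod 2) : a + a = 0 := by revert a; decide

def ind (S : Finset (Fin m)) : Fin m → ZMod 2 := fun i => if i ∈ S then 1 else 0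

def supp (x : Fin m → ZMod 2) : Finset (Fin m) := Finset.univ.filter (fun i => x i = 1)

lemma ind_supp (x : Fin m → ZMod 2) : ind (supp x) = x := by
  funext i
  simp only [ind, supp, mem_filter, mem_univ, true_and]
  rcases zmod2_cases (x i) with h | h <;> simp [h]

lemma supp_ind (S : Finset (Fin m)) : supp (ind S) = S := by
  ext i; simp [supp, ind]

lemma prod_ind (S : Finset (Fin m)) (x : Fin m → ZMod 2) :
    (∏ i ∈ S, x i) = if S ⊆ supp x then 1 else 0 := by
  split_ifs with h
  · exact Finset.prod_eq_one (fun i hi => by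
      have := h hi; simp [supp] at this; exact this)
  · obtain ⟨i, hi, hni⟩ := Finset.not_subset.mp h
    have : x i = 0 := by
      rcases zmod2_cases (x i) with h0 | h1
      · exact h0
      · exact absurd (by simp [supp, h1]) hni
    exact Finset.prod_eq_zero hi this

lemma mobius (c : Finset (Fin m) → ZMod 2) (S : Finset (Fin m)) :
    ∑ X ∈ S.powerset, ∑ T ∈ X.powerset, c T = c S := by
  induction S using Finset.induction generalizing c with
  | empty => simp
  | @insert a S ha ih =>
    rw [Finset.sum_powerset_insert ha]
    have key : ∀ X ∈ S.powerset, ∑ T ∈ (insert a X).powerset, c T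
        = (∑ T ∈ X.powerset, c T) + ∑ T ∈ X.powerset, c (insert a T) := by
      intro X hX
      exact Finset.sum_powerset_insert (fun h => ha (Finset.mem_powerset.mp hX h)) _
    rw [Finset.sum_congr rfl key, Finset.sum_add_distrib, ← add_assoc,
      zmod2_add_self, zero_add, ih (fun T => c (insert a T))]

def coef (g : (Fin m → ZMod 2) → ZMod 2) (S : Finset (Fin m)) : ZMod 2 :=
  ∑ X ∈ S.powerset, g (ind X)

lemma filter_subset_powerset (A : Finset (Fin m)) :
    Finset.univ.filter (fun S => S ⊆ A) = A.powerset := by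
  ext S; simp

lemma eval_coef (g : (Fin m → ZMod 2) → ZMod 2) (x : Fin m → ZMod 2) :
    ∑ S : Finset (Fin m), coef g S * ∏ i ∈ S, x i = g x := by
  have h1 : ∀ S : Finset (Fin m), coef g S * ∏ i ∈ S, x i
      = if S ⊆ supp x then coef g S else 0 := by
    intro S; rw [prod_ind]; split_ifs <;> simp
  rw [Finset.sum_congr rfl (fun S _ => h1 S), ← Finset.sum_filter,
    filter_subset_powerset]
  have := mobius (fun T => g (ind T)) (supp x)
  simpa [coef, ind_supp] using this

lemma coef_unique (g : (Fin m → ZMod 2) → ZMod 2) (c : Finset (Fin m) → ZMod 2)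
    (h : ∀ x, g x = ∑ S : Finset (Fin m), c S * ∏ i ∈ S, x i) : coef g = c := by
  funext S
  have key : ∀ X : Finset (Fin m), g (ind X) = ∑ T ∈ X.powerset, c T := by
    intro X
    rw [h (ind X)]
    have h1 : ∀ T : Finset (Fin m), c T * ∏ i ∈ T, (ind X) i
        = if T ⊆ X then c T else 0 := by
      intro T; rw [prod_ind, supp_ind]; split_ifs <;> simp
    rw [Finset.sum_congr rfl (fun T _ => h1 T), ← Finset.sum_filter,
      filter_subset_powerset]
  calc coef g S = ∑ X ∈ S.powerset, ∑ T ∈ X.powerset, c T :=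
        Finset.sum_congr rfl (fun X _ => key X)
    _ = c S := mobius c S

def Dv (b : Fin m → ZMod 2) (g : (Fin m → ZMod 2) → ZMod 2) : (Fin m → ZMod 2) → ZMod 2 :=
  fun y => g (y + b) + g y

def Dc (c : Finset (Fin m) → ZMod 2) (b : Fin m → ZMod 2) (T : Finset (Fin m)) : ZMod 2 :=
  ∑ S : Finset (Fin m), if T ⊆ S ∧ T ≠ S then c S * ∏ i ∈ S \ T, b i else 0

lemma deriv_anf (c : Finset (Fin m) → ZMod 2) (b y : Fin m → ZMod 2) :
    (∑ S : Finset (Fin m), c S * ∏ i ∈ S, (y i + b i))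
      + (∑ S : Finset (Fin m), c S * ∏ i ∈ S, y i)
    = ∑ T : Finset (Fin m), Dc c b T * ∏ i ∈ T, y i := by
  have h1 : ∀ S : Finset (Fin m), c S * ∏ i ∈ S, (y i + b i)
      = ∑ T : Finset (Fin m),
          if T ⊆ S then (c S * ∏ i ∈ S \ T, b i) * ∏ i ∈ T, y i else 0 := by
    intro S
    rw [Finset.prod_add, Finset.mul_sum, ← filter_subset_powerset, Finset.sum_filter]
    apply Finset.sum_congr rfl; intro T hT
    split_ifs with h
    · ring
    · rfl
  rw [Finset.sum_congr rfl (fun S _ => h1 S), Finset.sum_comm]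
  have h2 : ∀ T : Finset (Fin m),
      (∑ S : Finset (Fin m),
        if T ⊆ S then (c S * ∏ i ∈ S \ T, b i) * ∏ i ∈ T, y i else 0)
      = Dc c b T * ∏ i ∈ T, y i + c T * ∏ i ∈ T, y i := by
    intro T
    have split : ∀ S : Finset (Fin m),
        (if T ⊆ S then (c S * ∏ i ∈ S \ T, b i) * ∏ i ∈ T, y i else 0)
        = (if T ⊆ S ∧ T ≠ S then (c S * ∏ i ∈ S \ T, b i) * ∏ i ∈ T, y i else 0)
          + (if S = T then (c S * ∏ i ∈ S \ T, b i) * ∏ i ∈ T, y i else 0) := by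
      intro S
      by_cases h1 : S = T
      · subst h1; simp
      · by_cases h2 : T ⊆ S
        · have h3 : T ≠ S := fun h => h1 h.symm
          simp [h1, h2, h3]
        · simp [h1, h2]
    rw [Finset.sum_congr rfl (fun S _ => split S), Finset.sum_add_distrib,
      Finset.sum_ite_eq' Finset.univ T]
    simp [Dc, Finset.sum_mul]
  rw [Finset.sum_congr rfl (fun T _ => h2 T), Finset.sum_add_distrib, add_assoc,
    zmod2_add_self, add_zero]


lemma degle_iff (d : ℕ) (g : (Fin m → ZMod 2) → ZMod 2) :
    DegLE d g ↔ ∀ S : Finset (Fin m), d < S.card → coef g S = 0 := by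
  constructor
  · rintro ⟨c, hc, he⟩ S hS
    rw [coef_unique g c he]; exact hc S hS
  · intro h
    exact ⟨coef g, h, fun x => (eval_coef g x).symm⟩

lemma coef_Dv (g : (Fin m → ZMod 2) → ZMod 2) (b : Fin m → ZMod 2) :
    coef (Dv b g) = Dc (coef g) b := by
  apply coef_unique
  intro y
  have := deriv_anf (coef g) b y
  have e1 : ∀ z : Fin m → ZMod 2, (∑ S : Finset (Fin m), coef g S * ∏ i ∈ S, z i) = g z :=
    eval_coef g
  have e2 : (∑ S : Finset (Fin m), coef g S * ∏ i ∈ S, (y i + b i)) = g (y + b) := by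
    have := e1 (y + b); simpa using this
  rw [e2, e1 y] at this
  rw [show Dv b g y = g (y + b) + g y from rfl, this]

lemma degle_Dv {d : ℕ} {g : (Fin m → ZMod 2) → ZMod 2} (h : DegLE (d+1) g)
    (b : Fin m → ZMod 2) : DegLE d (Dv b g) := by
  rw [degle_iff] at h ⊢
  intro T hT
  rw [coef_Dv]
  apply Finset.sum_eq_zero
  intro S _
  split_ifs with hc
  · have hcard : d + 1 < S.card := by
      have h1 : T.card < S.card := Finset.card_lt_card (lt_of_le_of_ne hc.1 hc.2)
      omega
    rw [h S hcard, zero_mul]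
  · rfl

lemma degle_Dv_rev {d : ℕ} {g : (Fin m → ZMod 2) → ZMod 2}
    (h : ∀ b, DegLE d (Dv b g)) : DegLE (d+1) g := by
  rw [degle_iff]
  intro S hS
  have hne : S.Nonempty := Finset.card_pos.mp (by omega)
  obtain ⟨i, hi⟩ := hne
  have hd := (degle_iff d _).mp (h (ind {i})) (S.erase i)
    (by rw [Finset.card_erase_of_mem hi]; omega)
  rw [coef_Dv] at hd
  rw [← hd]
  unfold Dc
  rw [Finset.sum_eq_single S]
  · have h1 : S.erase i ⊆ S := Finset.erase_subset _ _
    have h2 : S.erase i ≠ S := fun h => (Finset.ne_of_mem_erase (h ▸ hi)) rfl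
    rw [if_pos ⟨h1, h2⟩]
    have h3 : S \ S.erase i = {i} := by
      ext j
      simp only [Finset.mem_sdiff, Finset.mem_erase, Finset.mem_singleton]
      constructor
      · rintro ⟨hjS, hj⟩
        by_contra hji
        exact hj ⟨hji, hjS⟩
      · rintro rfl; exact ⟨hi, fun h => h.1 rfl⟩
    rw [h3]
    simp [ind]
  · intro S' _ hS'
    split_ifs with hc
    · rcases hc with ⟨hsub, hne'⟩
      have hprod : (∏ j ∈ S' \ S.erase i, ind {i} j) = 0 := by
        rw [prod_ind, supp_ind, if_neg]
        intro hsub2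
        apply hS'
        have hS'sub : S' ⊆ S := by
          intro j hj
          by_cases hji : j ∈ S.erase i
          · exact Finset.mem_of_mem_erase hji
          · have : j ∈ S' \ S.erase i := Finset.mem_sdiff.mpr ⟨hj, hji⟩
            have := hsub2 this
            rw [Finset.mem_singleton] at this
            exact this ▸ hi
        -- S' ⊆ S, S.erase i ⊆ S', S' ≠ S.erase i ⟹ S' = S
        have hiS' : i ∈ S' := by
          by_contra hiS'
          apply hne'
          apply Finset.Subset.antisymm hsub
          intro j hj
          exact Finset.mem_erase.mpr ⟨fun h => hiS' (h ▸ hj), hS'sub hj⟩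
        apply Finset.Subset.antisymm hS'sub
        intro j hj
        by_cases hji : j = i
        · exact hji ▸ hiS'
        · exact hsub (Finset.mem_erase.mpr ⟨hji, hj⟩)
      rw [hprod, mul_zero]
    · rfl
  · intro hSu; exact absurd (Finset.mem_univ S) hSu

lemma filter_card_le_one :
    (Finset.univ.filter (fun S : Finset (Fin m) => S.card ≤ 1))
      = insert ∅ (Finset.univ.image (fun i : Fin m => ({i} : Finset (Fin m)))) := by
  ext S
  simp only [Finset.mem_filter, Finset.mem_univ, true_and, Finset.mem_insert,
    Finset.mem_image]
  constructor
  · intro h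
    rcases Nat.le_one_iff_eq_zero_or_eq_one.mp h with h' | h'
    · left; exact Finset.card_eq_zero.mp h'
    · right
      obtain ⟨a, ha⟩ := Finset.card_eq_one.mp h'
      exact ⟨a, ha.symm⟩
  · rintro (rfl | ⟨a, -, rfl⟩) <;> simp

lemma sum_low (c : Finset (Fin m) → ZMod 2) (hc : ∀ S : Finset (Fin m), 1 < S.card → c S = 0)
    (y : Fin m → ZMod 2) :
    (∑ S : Finset (Fin m), c S * ∏ i ∈ S, y i) = c ∅ + ∑ i : Fin m, c {i} * y i := by
  have h1 : (∑ S : Finset (Fin m), c S * ∏ i ∈ S, y i)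
      = ∑ S ∈ Finset.univ.filter (fun S : Finset (Fin m) => S.card ≤ 1),
          c S * ∏ i ∈ S, y i := by
    rw [Finset.sum_filter]
    apply Finset.sum_congr rfl
    intro S _
    split_ifs with h
    · rfl
    · rw [hc S (by omega), zero_mul]
  rw [h1, filter_card_le_one, Finset.sum_insert (by simp),
    Finset.sum_image (fun a _ b _ h => Finset.singleton_injective h)]
  simp

lemma degle_one_iff (h : (Fin m → ZMod 2) → ZMod 2) :
    DegLE 1 h ↔ ∃ (γ : Fin m → ZMod 2) (ε : ZMod 2), ∀ y, h y = dotp γ y + ε := by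
  constructor
  · rintro ⟨c, hc, he⟩
    refine ⟨fun i => c {i}, c ∅, fun y => ?_⟩
    rw [he y, sum_low c hc, dotp, add_comm]
  · rintro ⟨γ, ε, he⟩
    refine ⟨fun S => if S = ∅ then ε else if S.card = 1 then ∑ i ∈ S, γ i else 0,
      fun S hS => ?_, fun y => ?_⟩
    · dsimp only
      rw [if_neg (by rintro rfl; simp at hS), if_neg (by omega)]
    · rw [sum_low _ (fun S hS => by
        rw [if_neg (by rintro rfl; simp at hS), if_neg (by omega)]) y]
      simp only [if_pos rfl]
      have : ∀ i : Fin m, (if ({i} : Finset (Fin m)) = ∅ then ε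
          else if ({i} : Finset (Fin m)).card = 1 then ∑ j ∈ ({i} : Finset (Fin m)), γ j
          else 0) * y i = γ i * y i := by
        intro i
        rw [if_neg (Finset.singleton_ne_empty i), if_pos (Finset.card_singleton i),
          Finset.sum_singleton]
      rw [Finset.sum_congr rfl (fun i _ => this i), he y, dotp, add_comm]
      simp

lemma dotp_add_left (x a y : Fin m → ZMod 2) : dotp (x + a) y = dotp x y + dotp a y := by
  simp [dotp, add_mul, Finset.sum_add_distrib]

lemma dotp_add_right (x a y : Fin m → ZMod 2) : dotp x (a + y) = dotp x a + dotp x y := by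
  simp [dotp, mul_add, Finset.sum_add_distrib]

lemma dotp_zero_left (y : Fin m → ZMod 2) : dotp 0 y = 0 := by simp [dotp]
lemma dotp_zero_right (y : Fin m → ZMod 2) : dotp y 0 = 0 := by simp [dotp]

lemma dotp_single (v : Fin m → ZMod 2) (i : Fin m) : dotp v (ind {i}) = v i := by
  simp [dotp, ind]

lemma dotp_nondeg (v : Fin m → ZMod 2) (h : ∀ x, dotp x v = 0) : v = 0 := by
  funext i
  have := h (ind {i})
  rw [show dotp (ind {i}) v = dotp v (ind {i}) by
    simp [dotp, mul_comm], dotp_single] at this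
  exact this

lemma vadd_self (w : Fin m → ZMod 2) : w + w = 0 := funext fun i => zmod2_add_self (w i)

lemma DvDv (g : (Fin m → ZMod 2) → ZMod 2) (b d y : Fin m → ZMod 2) :
    Dv d (Dv b g) y = g y + g (y + b) + g (y + d) + g (y + b + d) := by
  show (g (y + d + b) + g (y + d)) + (g (y + b) + g y) = _
  rw [show y + d + b = y + b + d from by abel]
  ring

lemma deg3_iff (g : (Fin m → ZMod 2) → ZMod 2) :
    DegLE 3 g ↔ ∀ b d : Fin m → ZMod 2, ∃ (γ : Fin m → ZMod 2) (ε : ZMod 2),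
      ∀ y, g y + g (y + b) + g (y + d) + g (y + b + d) = dotp γ y + ε := by
  constructor
  · intro h b d
    have h1 : DegLE 1 (Dv d (Dv b g)) := degle_Dv (degle_Dv (d := 2) h b) d
    obtain ⟨γ, ε, he⟩ := (degle_one_iff _).mp h1
    exact ⟨γ, ε, fun y => (DvDv g b d y).symm.trans (he y)⟩
  · intro h
    apply degle_Dv_rev (d := 2)
    intro b
    apply degle_Dv_rev
    intro d
    rw [degle_one_iff]
    obtain ⟨γ, ε, he⟩ := h b d
    exact ⟨γ, ε, fun y => (DvDv g b d y).trans (he y)⟩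

end AuxMM

/-- the Maiorana–McFarland function f(x,y) = x·y + g(y). -/
theorem stmt_7 (m : ℕ) (hm : 1 ≤ m) (g : (Fin m → ZMod 2) → ZMod 2)
    (f : (Fin m → ZMod 2) → (Fin m → ZMod 2) → ZMod 2)
    (hf : ∀ x y, f x y = dotp x y + g y) :
    (∀ a b c d : Fin m → ZMod 2, ∃ (α β : Fin m → ZMod 2) (ε : ZMod 2),
      ∀ x y : Fin m → ZMod 2,
        f x y + f (x + a) (y + b) + f (x + c) (y + d) = f (x + α) (y + β) + ε)
    ↔ DegLE 3 g := by
  have h2 : (2 : ZMod 2) = 0 := by decide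
  rw [deg3_iff]
  constructor
  · intro H b d
    obtain ⟨α, β, ε, he⟩ := H 0 b 0 d
    simp only [hf, add_zero, zero_add, dotp_add_left, dotp_add_right] at he
    have hβ : β = b + d := by
      have key : ∀ x, dotp x (b + d + β) = 0 := by
        intro x
        have h1 := he x 0
        have h0 := he 0 0
        simp only [dotp_zero_left, dotp_zero_right, zero_add, add_zero] at h1 h0
        rw [dotp_add_right, dotp_add_right]
        linear_combination h1 - h0 + dotp x β * h2
      have h0v := dotp_nondeg _ key
      have key2 : ∀ p q r : ZMod 2, p + q + r = 0 → r = p + q := by decide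
      funext i
      exact key2 (b i) (d i) (β i) (congrFun h0v i)
    refine ⟨α, dotp α β + ε, fun y => ?_⟩
    have h1 := he 0 y
    simp only [dotp_zero_left, zero_add] at h1
    rw [show y + b + d = y + β from by rw [hβ, add_assoc]]
    linear_combination h1 + g (y + β) * h2
  · intro H a b c d
    obtain ⟨γ, ε₀, he⟩ := H b d
    refine ⟨γ + a + c, b + d,
      dotp a b + dotp c d + dotp (γ + a + c) (b + d) + ε₀, fun x y => ?_⟩
    simp only [hf, dotp_add_left, dotp_add_right]
    rw [show y + (b + d) = y + b + d from (add_assoc y b d).symm]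
    linear_combination he y + (dotp x y - dotp a b - dotp c d - g (y + b + d)
      - dotp γ b - dotp c b - dotp γ d - dotp a d) * h2
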